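/- arXiv:math/0610167 — 3 statements merged into one kernel-verified Lean document; each statement's English description precedes it below -/
import Mathlib

section
/- Let C be a finite-dimensional chain complex over the field Z/2 with basis B. Suppose x_i, x_j are basis elements with x_j appearing in d(x_i). Define a new complex C' whose underlying vector space is spanned by B \ {x_i, x_j}, with differential d'(x_k) = d(x_k) + d(x_i) if x_j appears in d(x_k), and d'(x_k) = d(x_k) otherwise, where in both cases the result is truncated to the span of B \ {x_i, x_j}. Then (d')^2 = 0 and H_*(C') is isomorphic to H_*(C). -/
/-!
Let `K = -E_{ji}`, let `F : C → C'` be the matrix `1 + dK` with rows `i, j` deleted and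
`G : C' → C` the matrix `1 + Kd` with columns `i, j` deleted; then `d'` is `(1 + dK) d` with
both deleted. Since `d i j = 1`, row `i` of `1 + dK` and column `j` of `1 + Kd` vanish, so
deleting the indices `i, j` between two such factors changes no product. Consequently `F` and
`G` are chain maps, `F G = 1` and `G F = 1 + (dK + Kd)`, using `d² = 0` and `K² = 0`. So
`d'² = F d² G = 0`, and `F`, `G` are mutually inverse homotopy equivalences, hence induce
inverse isomorphisms in homology.
-/

namespace Differential

open LinearMap Submodule

variable {R V W : Type*} [Ring R] [AddCommGroup V] [Module R V] [AddCommGroup W] [Module R W]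

abbrev homology (D : V →ₗ[R] V) : Type _ :=
  ker D ⧸ (range D).comap (ker D).subtype

variable {D : V →ₗ[R] V} {D' : W →ₗ[R] W}

def homologyMap (F : V →ₗ[R] W) (hF : F ∘ₗ D = D' ∘ₗ F) : homology D →ₗ[R] homology D' :=
  mapQ _ _
    (F.restrict fun x (hx : D x = 0) =>
      show D' (F x) = 0 from (LinearMap.congr_fun hF x).symm.trans (by simp [hx]))
    fun x ⟨y, hy⟩ => ⟨F y, (LinearMap.congr_fun hF y).symm.trans (congrArg F hy)⟩

theorem homologyMap_comp_homologyMap_eq_id {F : V →ₗ[R] W} {G : W →ₗ[R] V}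
    (hF : F ∘ₗ D = D' ∘ₗ F) (hG : G ∘ₗ D' = D ∘ₗ G) (K : V →ₗ[R] V)
    (hK : G ∘ₗ F = LinearMap.id + (D ∘ₗ K + K ∘ₗ D)) :
    homologyMap G hG ∘ₗ homologyMap F hF = LinearMap.id := by
  refine quot_hom_ext _ _ _ fun x => (Submodule.Quotient.eq _).2 (mem_comap.2 ⟨K x, ?_⟩)
  have hx : D x = 0 := x.2
  have hGF := LinearMap.congr_fun hK x
  simp only [LinearMap.comp_apply, LinearMap.add_apply, LinearMap.id_apply, hx, map_zero,
    add_zero] at hGF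
  change D (K x) = G (F x) - x
  rw [hGF, add_sub_cancel_left]

def homologyEquivOfHomotopyEquiv {F : V →ₗ[R] W} {G : W →ₗ[R] V}
    (hF : F ∘ₗ D = D' ∘ₗ F) (hG : G ∘ₗ D' = D ∘ₗ G) (K : V →ₗ[R] V) (L : W →ₗ[R] W)
    (hK : G ∘ₗ F = LinearMap.id + (D ∘ₗ K + K ∘ₗ D))
    (hL : F ∘ₗ G = LinearMap.id + (D' ∘ₗ L + L ∘ₗ D')) :
    homology D ≃ₗ[R] homology D' :=
  .ofLinearMap (homologyMap F hF) (homologyMap G hG)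
    (homologyMap_comp_homologyMap_eq_id hG hF L hL) (homologyMap_comp_homologyMap_eq_id hF hG K hK)

end Differential

namespace Matrix

section Submatrix

variable {ι α β R : Type*} [Fintype ι] [NonUnitalNonAssocSemiring R]

-- The type ascriptions select `Matrix`'s multiplication rather than the default `CStarMatrix` one.
theorem submatrix_val_mul_submatrix_val {p : ι → Prop} [DecidablePred p]
    (M : Matrix α ι R) (N : Matrix ι β R) (h : ∀ k, ¬ p k → ∀ a b, M a k * N k b = 0) :
    (M.submatrix id Subtype.val : Matrix α (Subtype p) R) *
      (N.submatrix Subtype.val id : Matrix (Subtype p) β R) = M * N := by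
  refine Matrix.ext fun a b => ?_
  simp only [mul_apply, submatrix_apply, id]
  rw [← Finset.sum_subtype (Finset.univ.filter p) (by simp) (fun k => M a k * N k b)]
  exact Finset.sum_filter_of_ne fun k _ hk => not_not.1 fun hp => hk (h k hp a b)

end Submatrix

section Cancellation

variable {ι R : Type*} [Fintype ι] [DecidableEq ι] [CommRing R] (d : Matrix ι ι R) (i j : ι)

def cancelHomotopy : Matrix ι ι R := single j i (-1)

def cancelRetraction : Matrix {k // k ≠ i ∧ k ≠ j} ι R :=
  (1 + d * cancelHomotopy i j).submatrix Subtype.val id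

def cancelInclusion : Matrix ι {k // k ≠ i ∧ k ≠ j} R :=
  (1 + cancelHomotopy i j * d).submatrix id Subtype.val

def cancelDifferential : Matrix {k // k ≠ i ∧ k ≠ j} {k // k ≠ i ∧ k ≠ j} R :=
  ((1 + d * cancelHomotopy i j) * d).submatrix Subtype.val Subtype.val

theorem cancelDifferential_apply (k l) :
    cancelDifferential d i j k l = d k l - d k j * d i l := by
  simp [cancelDifferential, cancelHomotopy, add_mul, mul_apply, single, sub_eq_add_neg, ite_and]

variable {d i j}

theorem one_add_mul_cancelHomotopy_row_eq_zero (h : d i j = 1) (l : ι) :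
    (1 + d * cancelHomotopy i j : Matrix ι ι R) i l = 0 := by
  by_cases hl : l = i
  · subst hl; simp [cancelHomotopy, h]
  · simp [cancelHomotopy, hl, Ne.symm hl]

theorem one_add_cancelHomotopy_mul_col_eq_zero (h : d i j = 1) (t : ι) :
    (1 + cancelHomotopy i j * d : Matrix ι ι R) t j = 0 := by
  by_cases ht : t = j
  · subst ht; simp [cancelHomotopy, h]
  · simp [cancelHomotopy, ht]

theorem one_add_cancelHomotopy_mul_mul_one_add (hd : d * d = 0) :
    (1 + cancelHomotopy i j * d) * (1 + d * cancelHomotopy i j) =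
      1 + (d * cancelHomotopy i j + cancelHomotopy i j * d) := by
  calc _ = 1 + (d * cancelHomotopy i j + cancelHomotopy i j * d) +
        cancelHomotopy i j * (d * d) * cancelHomotopy i j := by noncomm_ring
    _ = _ := by rw [hd, Matrix.mul_zero, Matrix.zero_mul, add_zero]

theorem cancelInclusion_mul_cancelRetraction (hd : d * d = 0) (h : d i j = 1) :
    cancelInclusion d i j * cancelRetraction d i j =
      1 + (d * cancelHomotopy i j + cancelHomotopy i j * d) := by
  rw [cancelInclusion, cancelRetraction, submatrix_val_mul_submatrix_val,
    one_add_cancelHomotopy_mul_mul_one_add hd]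
  intro k hk a b
  obtain rfl | rfl : k = i ∨ k = j := by tauto
  · rw [one_add_mul_cancelHomotopy_row_eq_zero h, mul_zero]
  · rw [one_add_cancelHomotopy_mul_col_eq_zero h, zero_mul]

theorem cancelRetraction_mul_cancelInclusion (hij : i ≠ j) :
    cancelRetraction d i j * cancelInclusion d i j = 1 := by
  have hKK : cancelHomotopy (R := R) i j * cancelHomotopy i j = 0 :=
    single_mul_single_of_ne _ _ _ _ hij _
  have hexpand : (1 + d * cancelHomotopy i j) * (1 + cancelHomotopy i j * d) =
      1 + d * cancelHomotopy i j + cancelHomotopy i j * d +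
        d * (cancelHomotopy i j * cancelHomotopy i j) * d := by noncomm_ring
  rw [cancelRetraction, cancelInclusion, ← submatrix_mul _ _ _ _ _ Function.bijective_id,
    hexpand, hKK]
  ext ⟨k, hki, hkj⟩ ⟨l, hli, hlj⟩
  simp [cancelHomotopy, one_apply, hkj, hli, Subtype.ext_iff]

theorem cancelDifferential_mul_cancelRetraction (hd : d * d = 0) (h : d i j = 1) :
    cancelDifferential d i j * cancelRetraction d i j = cancelRetraction d i j * d := by
  have hcomm : (1 + d * cancelHomotopy i j) * d = d * (1 + cancelHomotopy i j * d) := by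
    noncomm_ring
  have hdBA : d * ((1 + cancelHomotopy i j * d) * (1 + d * cancelHomotopy i j)) =
      (1 + d * cancelHomotopy i j) * d := by
    rw [one_add_cancelHomotopy_mul_mul_one_add hd]
    calc _ = (1 + d * cancelHomotopy i j) * d + d * d * cancelHomotopy i j := by noncomm_ring
      _ = _ := by rw [hd, Matrix.zero_mul, add_zero]
  calc cancelDifferential d i j * cancelRetraction d i j
      = ((d * (1 + cancelHomotopy i j * d)).submatrix Subtype.val id).submatrix id Subtype.val *
          (1 + d * cancelHomotopy i j).submatrix Subtype.val id := by
        rw [cancelDifferential, cancelRetraction, hcomm]; rfl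
    _ = (d * (1 + cancelHomotopy i j * d) * (1 + d * cancelHomotopy i j)).submatrix
          Subtype.val id := by
        rw [submatrix_val_mul_submatrix_val]
        · rfl
        intro k hk a b
        obtain rfl | rfl : k = i ∨ k = j := by tauto
        · rw [one_add_mul_cancelHomotopy_row_eq_zero h, mul_zero]
        · simp [mul_apply, one_add_cancelHomotopy_mul_col_eq_zero h]
    _ = cancelRetraction d i j * d := by rw [Matrix.mul_assoc, hdBA]; rfl

theorem cancelInclusion_mul_cancelDifferential (hd : d * d = 0) (h : d i j = 1) :
    cancelInclusion d i j * cancelDifferential d i j = d * cancelInclusion d i j := by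
  have hBAd : (1 + cancelHomotopy i j * d) * (1 + d * cancelHomotopy i j) * d =
      d * (1 + cancelHomotopy i j * d) := by
    rw [one_add_cancelHomotopy_mul_mul_one_add hd]
    calc _ = d * (1 + cancelHomotopy i j * d) + cancelHomotopy i j * (d * d) := by noncomm_ring
      _ = _ := by rw [hd, Matrix.mul_zero, add_zero]
  calc cancelInclusion d i j * cancelDifferential d i j
      = (1 + cancelHomotopy i j * d).submatrix id Subtype.val *
          (((1 + d * cancelHomotopy i j) * d).submatrix id Subtype.val).submatrix Subtype.val id :=
        rfl
    _ = ((1 + cancelHomotopy i j * d) * ((1 + d * cancelHomotopy i j) * d)).submatrix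
          id Subtype.val := by
        rw [submatrix_val_mul_submatrix_val]
        · rfl
        intro k hk a b
        obtain rfl | rfl : k = i ∨ k = j := by tauto
        · simp [mul_apply, one_add_mul_cancelHomotopy_row_eq_zero h]
        · rw [one_add_cancelHomotopy_mul_col_eq_zero h, zero_mul]
    _ = d * cancelInclusion d i j := by rw [← Matrix.mul_assoc, hBAd]; rfl

theorem cancelDifferential_mul_self (hd : d * d = 0) (h : d i j = 1) (hij : i ≠ j) :
    cancelDifferential d i j * cancelDifferential d i j = 0 := by
  have hdF := cancelDifferential_mul_cancelRetraction hd h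
  calc cancelDifferential d i j * cancelDifferential d i j
      = cancelDifferential d i j * cancelDifferential d i j *
          (cancelRetraction d i j * cancelInclusion d i j) := by
        rw [cancelRetraction_mul_cancelInclusion hij, Matrix.mul_one]
    _ = cancelRetraction d i j * (d * d) * cancelInclusion d i j := by
        rw [← Matrix.mul_assoc, Matrix.mul_assoc _ _ (cancelRetraction d i j), hdF,
          ← Matrix.mul_assoc, hdF, Matrix.mul_assoc _ d d]
    _ = 0 := by rw [hd, Matrix.mul_zero, Matrix.zero_mul]

def cancelHomologyEquiv (hd : d * d = 0) (h : d i j = 1) (hij : i ≠ j) :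
    Differential.homology (cancelDifferential d i j).mulVecLin ≃ₗ[R]
      Differential.homology d.mulVecLin :=
  Differential.homologyEquivOfHomotopyEquiv
    (by rw [← mulVecLin_mul, ← mulVecLin_mul, cancelInclusion_mul_cancelDifferential hd h])
    (by rw [← mulVecLin_mul, ← mulVecLin_mul, cancelDifferential_mul_cancelRetraction hd h])
    0 (cancelHomotopy i j).mulVecLin
    (by rw [← mulVecLin_mul, cancelRetraction_mul_cancelInclusion hij, mulVecLin_one]; simp)
    (by rw [← mulVecLin_mul, cancelInclusion_mul_cancelRetraction hd h]; simp)

end Cancellation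

end Matrix

/-- Gaussian elimination (cancellation) for chain complexes over `ℤ/2`.  `C` is the
free `ℤ/2`-module on the basis `Fin m`, with differential given by the matrix `d`
(`d k l` is the coefficient of `x_l` in `d(x_k)`), satisfying `d² = 0`.  If `x_j`
appears in `d(x_i)` (i.e. `d i j = 1`), then the complex `C'` spanned by the remaining
basis elements, with differential `d' k l = d k l + d k j * d i l` (i.e.
`d'(x_k) = d(x_k) + d(x_i)` truncated, when `x_j` appears in `d(x_k)`, and the
truncation of `d(x_k)` otherwise), satisfies `d'² = 0` and has homology isomorphic to
that of `C`. -/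
theorem cancellation_lemma {m : ℕ} (d : Matrix (Fin m) (Fin m) (ZMod 2))
    (hd : d * d = 0) (i j : Fin m) (hij : i ≠ j) (h : d i j = 1)
    (d' : Matrix {k : Fin m // k ≠ i ∧ k ≠ j} {k : Fin m // k ≠ i ∧ k ≠ j} (ZMod 2))
    (hd' : ∀ k l, d' k l = d k l + d k j * d i l) :
    d' * d' = 0 ∧
      Nonempty (
        (↥(LinearMap.ker d'.mulVecLin) ⧸
            Submodule.comap (LinearMap.ker d'.mulVecLin).subtype
              (LinearMap.range d'.mulVecLin))
          ≃ₗ[ZMod 2]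
        (↥(LinearMap.ker d.mulVecLin) ⧸
            Submodule.comap (LinearMap.ker d.mulVecLin).subtype
              (LinearMap.range d.mulVecLin))) := by
  obtain rfl : d' = d.cancelDifferential i j := by
    ext k l
    rw [hd', Matrix.cancelDifferential_apply, CharTwo.sub_eq_add]
  exact ⟨Matrix.cancelDifferential_mul_self hd h hij, ⟨Matrix.cancelHomologyEquiv hd h hij⟩⟩
end

section
/- For a point p in the plane not on a closed polygonal curve C built from horizontal and vertical grid segments, the winding number of C around p, computed as the signed count of intersections of C with any ray from p to infinity in generic position, is independent of the choice of ray. -/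
/-!
Summing the vertex condition of the cycle over a rectangle of lattice points and telescoping
shows that the net flux of the cycle out of any rectangle is zero. Put the curve and `p` inside
a large square, on whose boundary the cycle vanishes. The quadrant of the square below and to
the left of `p` then gives `wleft = wdown`, the one below and to the right gives
`wright = wdown`, and the one above and to the right gives `wright = wup`.
-/

open Finset Filter

theorem Int.sum_Icc_sub_one_sub {M : Type*} [AddCommGroup M] (f : ℤ → M) {l u : ℤ}
    (h : l - 1 ≤ u) : ∑ t ∈ Icc l u, (f (t - 1) - f t) = f (l - 1) - f u := by
  induction u, h using Int.leInduction with
  | base => simp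
  | succ u hu ih =>
    rw [← Finset.insert_Icc_right_eq_Icc_add_one (by omega), sum_insert (by simp), ih,
      add_sub_cancel_right]
    abel

namespace Finsupp

variable {α β M : Type*} [AddCommMonoid M]

theorem sum_support_ite_eq_sum (c : α →₀ M) (P : α → Prop) [DecidablePred P] (B : Finset α)
    (hB : ∀ q, c q ≠ 0 → P q → q ∈ B) (hP : ∀ q ∈ B, P q) :
    ∑ q ∈ c.support, (if P q then c q else 0) = ∑ q ∈ B, c q := by
  rw [← sum_filter]
  refine sum_subset (fun q hq => ?_) fun q hqB hq => ?_
  · rw [mem_filter, mem_support_iff] at hq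
    exact hB q hq.1 hq.2
  · by_contra hne
    exact hq (mem_filter.2 ⟨mem_support_iff.2 hne, hP q hqB⟩)

theorem sum_support_ite_row [DecidableEq β] (c : α × β →₀ M) (b : β) (p : α → Prop)
    [DecidablePred p] (I : Finset α) (hI : ∀ x, c (x, b) ≠ 0 → p x → x ∈ I)
    (hp : ∀ x ∈ I, p x) :
    ∑ q ∈ c.support, (if q.2 = b ∧ p q.1 then c q else 0) = ∑ x ∈ I, c (x, b) := by
  rw [c.sum_support_ite_eq_sum _ (I ×ˢ {b}), sum_product]
  · simp only [sum_singleton]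
  · rintro ⟨x, y⟩ hc ⟨rfl, hx⟩
    exact mem_product.2 ⟨hI x hc hx, mem_singleton_self y⟩
  · rintro ⟨x, y⟩ hq
    obtain ⟨hx, hy⟩ := mem_product.1 hq
    exact ⟨mem_singleton.1 hy, hp x hx⟩

theorem sum_support_ite_column [DecidableEq α] (c : α × β →₀ M) (a : α) (p : β → Prop)
    [DecidablePred p] (I : Finset β) (hI : ∀ y, c (a, y) ≠ 0 → p y → y ∈ I)
    (hp : ∀ y ∈ I, p y) :
    ∑ q ∈ c.support, (if q.1 = a ∧ p q.2 then c q else 0) = ∑ y ∈ I, c (a, y) := by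
  rw [c.sum_support_ite_eq_sum _ ({a} ×ˢ I), sum_product]
  · simp only [sum_singleton]
  · rintro ⟨x, y⟩ hc ⟨rfl, hy⟩
    exact mem_product.2 ⟨mem_singleton_self x, hI y hc hy⟩
  · rintro ⟨x, y⟩ hq
    obtain ⟨hx, hy⟩ := mem_product.1 hq
    exact ⟨mem_singleton.1 hx, hp y hy⟩

end Finsupp

theorem Finset.exists_forall_abs_lt (s : Finset (ℤ × ℤ)) :
    ∃ N : ℤ, ∀ q ∈ s, -N < q.1 ∧ q.1 < N ∧ -N < q.2 ∧ q.2 < N := by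
  obtain ⟨N, hN⟩ :=
    (s.eventually_all.2 fun q _ =>
      (eventually_gt_atTop |q.1|).and (eventually_gt_atTop |q.2|)).exists
  exact ⟨N, fun q hq => by simpa only [abs_lt, and_assoc] using hN q hq⟩

section GridCycle

variable {M : Type*} [AddCommGroup M]

/-- `cv (x, y)` and `ch (x, y)` are the coefficients of the upward and the rightward unit edge
starting at `(x, y)`; the condition says that the inflow equals the outflow at every vertex. -/
def IsGridCycle (cv ch : ℤ × ℤ → M) : Prop :=
  ∀ x y : ℤ, cv (x, y - 1) + ch (x - 1, y) = cv (x, y) + ch (x, y)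

variable {cv ch : ℤ × ℤ → M}

theorem IsGridCycle.flux_rectangle (hc : IsGridCycle cv ch)
    {x0 x1 y0 y1 : ℤ} (hx : x0 - 1 ≤ x1) (hy : y0 - 1 ≤ y1) :
    ∑ x ∈ Icc x0 x1, (cv (x, y0 - 1) - cv (x, y1)) =
      ∑ y ∈ Icc y0 y1, (ch (x1, y) - ch (x0 - 1, y)) :=
  calc ∑ x ∈ Icc x0 x1, (cv (x, y0 - 1) - cv (x, y1))
      = ∑ x ∈ Icc x0 x1, ∑ y ∈ Icc y0 y1, (cv (x, y - 1) - cv (x, y)) :=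
        sum_congr rfl fun x _ => (Int.sum_Icc_sub_one_sub (fun y => cv (x, y)) hy).symm
    _ = ∑ x ∈ Icc x0 x1, ∑ y ∈ Icc y0 y1, -(ch (x - 1, y) - ch (x, y)) := by
        refine sum_congr rfl fun x _ => sum_congr rfl fun y _ => ?_
        rw [neg_sub, sub_eq_sub_iff_add_eq_add, hc x y, add_comm]
    _ = ∑ y ∈ Icc y0 y1, (ch (x1, y) - ch (x0 - 1, y)) := by
        rw [sum_comm]
        refine sum_congr rfl fun y _ => ?_
        rw [sum_neg_distrib, Int.sum_Icc_sub_one_sub (fun x => ch (x, y)) hx, neg_sub]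

theorem IsGridCycle.flux_lowerLeft (hc : IsGridCycle cv ch) {x0 y0 a b : ℤ} (ha : x0 - 1 ≤ a)
    (hb : y0 - 1 ≤ b) (hbot : ∀ x, cv (x, y0 - 1) = 0) (hleft : ∀ y, ch (x0 - 1, y) = 0) :
    ∑ x ∈ Icc x0 a, cv (x, b) + ∑ y ∈ Icc y0 b, ch (a, y) = 0 := by
  have := hc.flux_rectangle ha hb
  simp only [hbot, hleft, zero_sub, sub_zero, sum_neg_distrib] at this
  exact neg_eq_iff_add_eq_zero.1 this

theorem IsGridCycle.flux_lowerRight (hc : IsGridCycle cv ch) {x1 y0 a b : ℤ} (ha : a ≤ x1)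
    (hb : y0 - 1 ≤ b) (hbot : ∀ x, cv (x, y0 - 1) = 0) (hright : ∀ y, ch (x1, y) = 0) :
    ∑ x ∈ Icc (a + 1) x1, cv (x, b) = ∑ y ∈ Icc y0 b, ch (a, y) := by
  have := hc.flux_rectangle (x0 := a + 1) (x1 := x1) (y1 := b) (by omega) hb
  simpa only [hbot, hright, zero_sub, add_sub_cancel_right, sum_neg_distrib, neg_inj] using this

theorem IsGridCycle.flux_upperRight (hc : IsGridCycle cv ch) {x1 y1 a b : ℤ} (ha : a ≤ x1)
    (hb : b ≤ y1) (htop : ∀ x, cv (x, y1) = 0) (hright : ∀ y, ch (x1, y) = 0) :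
    ∑ x ∈ Icc (a + 1) x1, cv (x, b) + ∑ y ∈ Icc (b + 1) y1, ch (a, y) = 0 := by
  have := hc.flux_rectangle (x0 := a + 1) (x1 := x1) (y0 := b + 1)
    (y1 := y1) (by omega) (by omega)
  simp only [htop, hright, zero_sub, sub_zero, add_sub_cancel_right, sum_neg_distrib] at this
  exact eq_neg_iff_add_eq_zero.1 this

theorem IsGridCycle.ray_sums_eq {N a b : ℤ} (hc : IsGridCycle cv ch)
    (hv : ∀ x y, cv (x, y) ≠ 0 → -N < x ∧ x < N ∧ -N < y ∧ y < N)
    (hh : ∀ x y, ch (x, y) ≠ 0 → -N < x ∧ x < N ∧ -N < y ∧ y < N)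
    (hab : -N < a ∧ a < N ∧ -N < b ∧ b < N) :
    -∑ x ∈ Icc (-N) a, cv (x, b) = ∑ x ∈ Icc (a + 1) N, cv (x, b) ∧
      -∑ x ∈ Icc (-N) a, cv (x, b) = ∑ y ∈ Icc (-N) b, ch (a, y) ∧
      -∑ x ∈ Icc (-N) a, cv (x, b) = -∑ y ∈ Icc (b + 1) N, ch (a, y) := by
  have hbot : ∀ x, cv (x, -N - 1) = 0 := fun x => by_contra fun h => by have := hv _ _ h; omega
  have htop : ∀ x, cv (x, N) = 0 := fun x => by_contra fun h => by have := hv _ _ h; omega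
  have hleft : ∀ y, ch (-N - 1, y) = 0 := fun y => by_contra fun h => by have := hh _ _ h; omega
  have hright : ∀ y, ch (N, y) = 0 := fun y => by_contra fun h => by have := hh _ _ h; omega
  have hLL := hc.flux_lowerLeft (a := a) (b := b) (by omega) (by omega) hbot hleft
  have hLR := hc.flux_lowerRight (a := a) (b := b) (by omega) (by omega) hbot hright
  have hUR := hc.flux_upperRight (a := a) (b := b) (by omega) (by omega) htop hright
  refine ⟨?_, ?_, ?_⟩
  · rw [hLR, neg_eq_iff_add_eq_zero, hLL]
  · exact neg_eq_iff_add_eq_zero.2 hLL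
  · rw [neg_inj, eq_neg_of_add_eq_zero_left hLL, eq_neg_of_add_eq_zero_right hUR, hLR]

end GridCycle

/-- The rays start at `p = (a + 1/2, b + 1/2)`. -/
theorem winding_number_ray_independent (cv ch : ℤ × ℤ →₀ ℤ)
    (hcycle : ∀ x y : ℤ, cv (x, y - 1) + ch (x - 1, y) = cv (x, y) + ch (x, y))
    (a b : ℤ) :
    let wleft : ℤ := -∑ q ∈ cv.support, if q.2 = b ∧ q.1 ≤ a then cv q else 0
    let wright : ℤ := ∑ q ∈ cv.support, if q.2 = b ∧ a + 1 ≤ q.1 then cv q else 0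
    let wdown : ℤ := ∑ q ∈ ch.support, if q.1 = a ∧ q.2 ≤ b then ch q else 0
    let wup : ℤ := -∑ q ∈ ch.support, if q.1 = a ∧ b + 1 ≤ q.2 then ch q else 0
    wleft = wright ∧ wleft = wdown ∧ wleft = wup := by
  intro wleft wright wdown wup
  obtain ⟨N, hN⟩ := (cv.support ∪ ch.support ∪ {(a, b)}).exists_forall_abs_lt
  have hv : ∀ x y, cv (x, y) ≠ 0 → -N < x ∧ x < N ∧ -N < y ∧ y < N :=
    fun x y h => hN (x, y) (by simp [h])
  have hh : ∀ x y, ch (x, y) ≠ 0 → -N < x ∧ x < N ∧ -N < y ∧ y < N :=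
    fun x y h => hN (x, y) (by simp [h])
  have hL : ∑ q ∈ cv.support, (if q.2 = b ∧ q.1 ≤ a then cv q else 0) =
      ∑ x ∈ Icc (-N) a, cv (x, b) :=
    cv.sum_support_ite_row b (· ≤ a) _ (fun x h hx => mem_Icc.2 ⟨(hv x b h).1.le, hx⟩)
      fun x hx => (mem_Icc.1 hx).2
  have hR : ∑ q ∈ cv.support, (if q.2 = b ∧ a + 1 ≤ q.1 then cv q else 0) =
      ∑ x ∈ Icc (a + 1) N, cv (x, b) :=
    cv.sum_support_ite_row b (a + 1 ≤ ·) _ (fun x h hx => mem_Icc.2 ⟨hx, (hv x b h).2.1.le⟩)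
      fun x hx => (mem_Icc.1 hx).1
  have hD : ∑ q ∈ ch.support, (if q.1 = a ∧ q.2 ≤ b then ch q else 0) =
      ∑ y ∈ Icc (-N) b, ch (a, y) :=
    ch.sum_support_ite_column a (· ≤ b) _ (fun y h hy => mem_Icc.2 ⟨(hh a y h).2.2.1.le, hy⟩)
      fun y hy => (mem_Icc.1 hy).2
  have hU : ∑ q ∈ ch.support, (if q.1 = a ∧ b + 1 ≤ q.2 then ch q else 0) =
      ∑ y ∈ Icc (b + 1) N, ch (a, y) :=
    ch.sum_support_ite_column a (b + 1 ≤ ·) _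
      (fun y h hy => mem_Icc.2 ⟨hy, (hh a y h).2.2.2.le⟩) fun y hy => (mem_Icc.1 hy).1
  simp only [wleft, wright, wdown, wup, hL, hR, hD, hU]
  exact IsGridCycle.ray_sums_eq hcycle hv hh (hN (a, b) (by simp))
end

section
/- If C is a finite-dimensional chain complex over Z/2 and the reduction algorithm (repeatedly canceling a pair of vertices joined by an edge, replacing X_k by X_k Δ X_i whenever there is an edge X_k → X_j, and updating edges by mod-2 counting) terminates in a graph with no edges, then the labels of the remaining vertices form a basis for the homology H_*(C). -/
/-!
Each reduction step is a step of Gaussian elimination on the differential `f`. The invariant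
(`ReductionFrame`) is a basis of `C` made of the labels `x_k` of the current vertices and of the
pairs `a_s, f a_s` cancelled so far, together with its dual basis `Φ_k, φ_s ∘ f, φ_s`; the edges
of the current graph are the entries `Φ_l (f x_k)` of the reduced differential. Cancelling the
edge `i → j` turns `x_i` into a new `a`, replaces `x_k` by `x_k - Φ_j (f x_k) x_i` and `Φ_l` by
`Φ_l - Φ_l (f x_i) Φ_j`, which over `ZMod 2` is exactly the relabelling and the mod-2 edge update.
When no edge is left, the `x_k` are cycles, and `h : f a_s ↦ a_s` satisfies `f h + h f = 1 - π`
with `π` the projection onto the span of the `x_k`, so `π` identifies `H(C)` with that span.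
-/

/-- A state of the reduction algorithm: a directed graph whose vertices (a subset of
the original index set) are labeled by subsets of the basis `Fin m`. -/
structure LabeledGraph (m : ℕ) where
  verts : Finset (Fin m)
  label : Fin m → Finset (Fin m)
  edge : Fin m → Fin m → Bool

/-- One step of the reduction algorithm: choose an edge from `i` to `j`, delete both
vertices, replace the label `X k` by `X k Δ X i` whenever there was an edge `k → j`
(leaving it unchanged otherwise), and update edges by mod-2 counting: there is an edge
`k → l` in the new graph iff exactly one of `k`, `i` had an edge to `l` (when `k` had
an edge to `j`), resp. iff `k` had an edge to `l` (otherwise). -/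
def ReduceStep {m : ℕ} (G G' : LabeledGraph m) : Prop :=
  ∃ i ∈ G.verts, ∃ j ∈ G.verts, i ≠ j ∧ G.edge i j = true ∧
    G'.verts = (G.verts.erase i).erase j ∧
    (∀ k ∈ G'.verts,
      G'.label k = if G.edge k j then symmDiff (G.label k) (G.label i) else G.label k) ∧
    (∀ k ∈ G'.verts, ∀ l ∈ G'.verts,
      G'.edge k l = if G.edge k j then xor (G.edge k l) (G.edge i l) else G.edge k l)

open Module

theorem Finset.mem_of_mem_erase_erase {α : Type*} [DecidableEq α] {s : Finset α} {i j k : α}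
    (hk : k ∈ (s.erase i).erase j) : k ∈ s ∧ k ≠ i ∧ k ≠ j := by
  simp only [Finset.mem_erase] at hk
  exact ⟨hk.2.2, hk.2.1, hk.1⟩

section Homology

variable {R M ι κ : Type*} [CommRing R] [AddCommGroup M] [Module R M]

abbrev LinearMap.homology (f : M →ₗ[R] M) : Type _ :=
  LinearMap.ker f ⧸ (LinearMap.range f).comap (LinearMap.ker f).subtype

theorem exists_basis_homology_of_basis [Fintype ι] [Fintype κ]
    (f : M →ₗ[R] M) (hf : f ∘ₗ f = 0) (b : Basis (ι ⊕ κ ⊕ κ) R M)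
    (hcyc : ∀ i, f (b (.inl i)) = 0) (hbdry : ∀ s, f (b (.inr (.inl s))) = b (.inr (.inr s))) :
    ∃ bas : Basis ι R f.homology, ∀ i, bas i = Submodule.Quotient.mk ⟨b (.inl i), hcyc i⟩ := by
  classical
  have hff : ∀ s, f (b (.inr (.inr s))) = 0 := fun s => by
    rw [← hbdry]; exact LinearMap.congr_fun hf _
  let h : M →ₗ[R] M := ∑ s, (b.coord (.inr (.inr s))).smulRight (b (.inr (.inl s)))
  let π : M →ₗ[R] M := ∑ i, (b.coord (.inl i)).smulRight (b (.inl i))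
  have homotopy : ∀ y, f (h y) + h (f y) + π y = y := by
    have : f ∘ₗ h + h ∘ₗ f + π = LinearMap.id := by
      refine b.ext fun p => ?_
      rcases p with i | s | s <;> simp [h, π, hcyc, hbdry, hff, Finsupp.single_apply]
    exact fun y => LinearMap.congr_fun this y
  have coord_f : ∀ i y, b.coord (.inl i) (f y) = 0 := by
    have : ∀ i, b.coord (.inl i) ∘ₗ f = 0 := fun i => by
      refine b.ext fun p => ?_
      rcases p with j | s | s <;> simp [hcyc, hbdry, hff]
    exact fun i y => LinearMap.congr_fun (this i) y
  let g : LinearMap.ker f →ₗ[R] (ι → R) :=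
    LinearMap.pi (fun i => b.coord (.inl i)) ∘ₗ (LinearMap.ker f).subtype
  have hker : LinearMap.ker g = (LinearMap.range f).comap (LinearMap.ker f).subtype := by
    ext ⟨z, hz⟩
    simp only [LinearMap.mem_ker, Submodule.mem_comap, Submodule.coe_subtype, LinearMap.mem_range]
    constructor
    · intro hgz
      have hπ : π z = 0 := by
        refine (LinearMap.sum_apply _ _ _).trans (Finset.sum_eq_zero fun i _ => ?_)
        have hi : b.coord (.inl i) z = 0 := congr_fun hgz i
        rw [LinearMap.smulRight_apply, hi, zero_smul]
      exact ⟨h z, by simpa [LinearMap.mem_ker.mp hz, hπ] using homotopy z⟩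
    · rintro ⟨y, rfl⟩
      exact funext fun i => coord_f i y
  have hg : Function.Surjective g := by
    intro c
    refine ⟨⟨∑ i, c i • b (.inl i), by simp [hcyc]⟩, funext fun j => ?_⟩
    simp [g, Finsupp.single_apply]
  let e := (Submodule.quotEquivOfEq _ _ hker.symm).trans (g.quotKerEquivOfSurjective hg)
  refine ⟨(Pi.basisFun R ι).map e.symm, fun i => ?_⟩
  rw [Basis.map_apply, LinearEquiv.symm_apply_eq]
  funext j
  simp [e, g, Finsupp.single_apply, Pi.single_apply, eq_comm]

end Homology

section Frame

variable {R M ι : Type*} [CommRing R] [AddCommGroup M] [Module R M] [DecidableEq ι]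

/-- An intermediate stage of Gaussian elimination on `f`: the vectors `x k` (`k ∈ V`; values off
`V` are irrelevant) and the cancelled pairs `a s, f (a s)`, with dual functionals `Φ k`,
`φ s ∘ f`, `φ s`. The reduced differential on the `x k` has matrix `Φ l (f (x k))`. -/
structure ReductionFrame (f : M →ₗ[R] M) (V : Finset ι) where
  r : ℕ
  x : ι → M
  a : Fin r → M
  Φ : ι → Dual R M
  φ : Fin r → Dual R M
  Φ_x : ∀ k ∈ V, ∀ l ∈ V, Φ l (x k) = if l = k then 1 else 0
  Φ_a : ∀ l ∈ V, ∀ s, Φ l (a s) = 0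
  Φ_fa : ∀ l ∈ V, ∀ s, Φ l (f (a s)) = 0
  φ_x : ∀ k ∈ V, ∀ s, φ s (x k) = 0
  φ_fx : ∀ k ∈ V, ∀ s, φ s (f (x k)) = 0
  φ_a : ∀ s t, φ s (a t) = 0
  φ_fa : ∀ s t, φ s (f (a t)) = if s = t then 1 else 0
  card_add_two_mul : V.card + 2 * r = finrank R M

namespace ReductionFrame

variable {f : M →ₗ[R] M} {V : Finset ι}

def standard [Nontrivial R] [Fintype ι] (f : (ι → R) →ₗ[R] (ι → R)) :
    ReductionFrame f (Finset.univ : Finset ι) where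
  r := 0
  x k := Pi.single k 1
  a := Fin.elim0
  Φ l := LinearMap.proj l
  φ := Fin.elim0
  Φ_x k _ l _ := by simp [Pi.single_apply]
  Φ_a _ _ s := s.elim0
  Φ_fa _ _ s := s.elim0
  φ_x _ _ s := s.elim0
  φ_fx _ _ s := s.elim0
  φ_a s := s.elim0
  φ_fa s := s.elim0
  card_add_two_mul := by simp

/-- Gaussian elimination at the pivot entry `(i, j)` of the reduced differential. -/
def cancel (F : ReductionFrame f V) {i j : ι} (hi : i ∈ V) (hj : j ∈ V) (hij : i ≠ j)
    (hpiv : F.Φ j (f (F.x i)) = 1) : ReductionFrame f ((V.erase i).erase j) where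
  r := F.r + 1
  x k := F.x k - F.Φ j (f (F.x k)) • F.x i
  a := Fin.snoc F.a (F.x i)
  Φ l := F.Φ l - F.Φ l (f (F.x i)) • F.Φ j
  φ := Fin.snoc F.φ (F.Φ j)
  Φ_x k hk l hl := by
    obtain ⟨hk, -, hkj⟩ := Finset.mem_of_mem_erase_erase hk
    obtain ⟨hl, hli, -⟩ := Finset.mem_of_mem_erase_erase hl
    simp [F.Φ_x k hk l hl, F.Φ_x i hi l hl, F.Φ_x k hk j hj, F.Φ_x i hi j hj, hli, hkj.symm,
      hij.symm]
  Φ_a l hl s := by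
    obtain ⟨hl, hli, -⟩ := Finset.mem_of_mem_erase_erase hl
    refine Fin.lastCases ?_ (fun t => ?_) s
    · simp [F.Φ_x i hi l hl, F.Φ_x i hi j hj, hli, hij.symm]
    · simp [F.Φ_a l hl, F.Φ_a j hj]
  Φ_fa l hl s := by
    obtain ⟨hl, -, -⟩ := Finset.mem_of_mem_erase_erase hl
    refine Fin.lastCases ?_ (fun t => ?_) s
    · simp [hpiv]
    · simp [F.Φ_fa l hl, F.Φ_fa j hj]
  φ_x k hk s := by
    obtain ⟨hk, -, hkj⟩ := Finset.mem_of_mem_erase_erase hk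
    refine Fin.lastCases ?_ (fun t => ?_) s
    · simp [F.Φ_x k hk j hj, F.Φ_x i hi j hj, hkj.symm, hij.symm]
    · simp [F.φ_x k hk, F.φ_x i hi]
  φ_fx k hk s := by
    obtain ⟨hk, -, -⟩ := Finset.mem_of_mem_erase_erase hk
    refine Fin.lastCases ?_ (fun t => ?_) s
    · simp [hpiv]
    · simp [F.φ_fx k hk, F.φ_fx i hi]
  φ_a s t := by
    refine Fin.lastCases ?_ (fun s => ?_) s <;> refine Fin.lastCases ?_ (fun t => ?_) t
    · simp [F.Φ_x i hi j hj, hij.symm]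
    · simp [F.Φ_a j hj]
    · simp [F.φ_x i hi]
    · simp [F.φ_a]
  φ_fa s t := by
    refine Fin.lastCases ?_ (fun s => ?_) s <;> refine Fin.lastCases ?_ (fun t => ?_) t
    · simp [hpiv]
    · simp [F.Φ_fa j hj, (Fin.castSucc_lt_last t).ne']
    · simp [F.φ_fx i hi, (Fin.castSucc_lt_last s).ne]
    · simp [F.φ_fa]
  card_add_two_mul := by
    have hi' : i ∈ V.erase j := Finset.mem_erase.mpr ⟨hij, hi⟩
    have h₁ := Finset.card_erase_add_one hj
    have h₂ := Finset.card_erase_add_one hi'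
    rw [Finset.erase_right_comm]
    linarith [F.card_add_two_mul]

def vec (F : ReductionFrame f V) : V ⊕ Fin F.r ⊕ Fin F.r → M :=
  Sum.elim (fun k => F.x k) (Sum.elim F.a (fun s => f (F.a s)))

def covec (F : ReductionFrame f V) : V ⊕ Fin F.r ⊕ Fin F.r → Dual R M :=
  Sum.elim (fun l => F.Φ l) (Sum.elim (fun s => F.φ s ∘ₗ f) F.φ)

theorem cancel_Φ_f_x (F : ReductionFrame f V) {i j : ι} (hi : i ∈ V) (hj : j ∈ V) (hij : i ≠ j)
    (hpiv : F.Φ j (f (F.x i)) = 1) (k l : ι) :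
    (F.cancel hi hj hij hpiv).Φ l (f ((F.cancel hi hj hij hpiv).x k)) =
      F.Φ l (f (F.x k)) - F.Φ j (f (F.x k)) * F.Φ l (f (F.x i)) := by
  simp [cancel, hpiv]

theorem covec_vec (F : ReductionFrame f V) (hf : f ∘ₗ f = 0) (p q : V ⊕ Fin F.r ⊕ Fin F.r) :
    F.covec p (F.vec q) = if p = q then 1 else 0 := by
  have hff : ∀ y, f (f y) = 0 := LinearMap.congr_fun hf
  rcases p with ⟨l, hl⟩ | s | s <;> rcases q with ⟨k, hk⟩ | t | t <;>
    simp [vec, covec, F.Φ_x, F.Φ_a, F.Φ_fa, F.φ_x, F.φ_fx, F.φ_a, F.φ_fa, Subtype.ext_iff,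
      eq_comm, *]

end ReductionFrame

end Frame

namespace ReductionFrame

variable {K M ι : Type*} [Field K] [AddCommGroup M] [Module K M] [FiniteDimensional K M]
  [DecidableEq ι] {f : M →ₗ[K] M} {V : Finset ι}

noncomputable def basis (F : ReductionFrame f V) (hf : f ∘ₗ f = 0) :
    Basis (V ⊕ Fin F.r ⊕ Fin F.r) K M :=
  basisOfLinearIndependentOfCardEqFinrank' F.vec
    (.of_pairwise_dual_eq_zero_one _ F.covec (fun p q hpq => by simp [F.covec_vec hf, hpq])
      (fun p => by simp [F.covec_vec hf]))
    (by
      rw [Fintype.card_sum, Fintype.card_sum, Fintype.card_coe, Fintype.card_fin,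
        ← F.card_add_two_mul, two_mul])

@[simp]
theorem coe_basis (F : ReductionFrame f V) (hf : f ∘ₗ f = 0) : ⇑(F.basis hf) = F.vec :=
  coe_basisOfLinearIndependentOfCardEqFinrank' ..

theorem eq_zero_of_forall_covec_eq_zero (F : ReductionFrame f V) (hf : f ∘ₗ f = 0) {y : M}
    (hy : ∀ p, F.covec p y = 0) : y = 0 := by
  classical
  have hcoord : ∀ p, F.covec p = (F.basis hf).coord p := fun p =>
    (F.basis hf).ext fun q => by
      rw [Basis.coord_apply, Basis.repr_self, Finsupp.single_apply, coe_basis, F.covec_vec hf]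
      exact if_congr eq_comm rfl rfl
  exact (F.basis hf).forall_coord_eq_zero_iff.mp fun p => hcoord p ▸ hy p

theorem exists_basis_homology (F : ReductionFrame f V) (hf : f ∘ₗ f = 0)
    (hred : ∀ k ∈ V, ∀ l ∈ V, F.Φ l (f (F.x k)) = 0) :
    ∃ hcyc : ∀ k : V, F.x k ∈ LinearMap.ker f,
      ∃ bas : Basis V K f.homology, ∀ k, bas k = Submodule.Quotient.mk ⟨F.x k, hcyc k⟩ := by
  have hcyc : ∀ k : V, f (F.x k) = 0 := fun ⟨k, hk⟩ =>
    F.eq_zero_of_forall_covec_eq_zero hf <| by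
      rintro (⟨l, hl⟩ | s | s)
      · exact hred k hk l hl
      · exact (congrArg (F.φ s) (LinearMap.congr_fun hf (F.x k))).trans (map_zero _)
      · exact F.φ_fx k hk s
  obtain ⟨bas, hbas⟩ :=
    exists_basis_homology_of_basis f hf (F.basis hf) (by simpa [vec] using hcyc) (by simp [vec])
  exact ⟨hcyc, bas, fun k => by simp [hbas, vec]⟩

end ReductionFrame

section Algorithm

variable {m : ℕ}

def indicatorVec {α : Type*} [DecidableEq α] (S : Finset α) : α → ZMod 2 :=
  fun t => if t ∈ S then 1 else 0

theorem indicatorVec_symmDiff {α : Type*} [DecidableEq α] (S T : Finset α) :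
    indicatorVec (symmDiff S T) = indicatorVec S + indicatorVec T := by
  funext t
  by_cases hS : t ∈ S <;> by_cases hT : t ∈ T <;>
    simp [indicatorVec, Finset.mem_symmDiff, hS, hT, CharTwo.add_self_eq_zero]

def LabeledGraph.edgeCoeff (G : LabeledGraph m) (k l : Fin m) : ZMod 2 :=
  if G.edge k l then 1 else 0

def LabeledGraph.IsReductionOf (G : LabeledGraph m)
    (f : (Fin m → ZMod 2) →ₗ[ZMod 2] (Fin m → ZMod 2)) : Prop :=
  ∃ F : ReductionFrame f G.verts, ∀ k ∈ G.verts,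
    F.x k = indicatorVec (G.label k) ∧ ∀ l ∈ G.verts, F.Φ l (f (F.x k)) = G.edgeCoeff k l

namespace LabeledGraph.IsReductionOf

variable {f : (Fin m → ZMod 2) →ₗ[ZMod 2] (Fin m → ZMod 2)}

theorem initial {G₀ : LabeledGraph m} (hv : G₀.verts = Finset.univ)
    (hl : ∀ k, G₀.label k = {k}) (he : ∀ k l, G₀.edgeCoeff k l = f (Pi.single k 1) l) :
    G₀.IsReductionOf f := by
  obtain ⟨verts, label, edge⟩ := G₀
  dsimp only at hv hl he ⊢
  subst hv
  refine ⟨ReductionFrame.standard f, fun k _ => ⟨?_, fun l _ => (he k l).symm⟩⟩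
  funext t
  simp [ReductionFrame.standard, indicatorVec, hl, Pi.single_apply]

theorem of_reduceStep {G G' : LabeledGraph m} (hstep : ReduceStep G G') (hG : G.IsReductionOf f) :
    G'.IsReductionOf f := by
  obtain ⟨i, hi, j, hj, hij, hEij, hV', hlabel, hedge⟩ := hstep
  obtain ⟨F, hF⟩ := hG
  obtain ⟨verts', label', edge'⟩ := G'
  dsimp only at hV' hlabel hedge ⊢
  subst hV'
  have hpiv : F.Φ j (f (F.x i)) = 1 := by simp [(hF i hi).2 j hj, edgeCoeff, hEij]
  refine ⟨F.cancel hi hj hij hpiv, fun k hk => ⟨?_, fun l hl => ?_⟩⟩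
  · dsimp only at hk ⊢
    obtain ⟨hkV, -, -⟩ := Finset.mem_of_mem_erase_erase hk
    change F.x k - F.Φ j (f (F.x k)) • F.x i = _
    rw [(hF k hkV).2 j hj, (hF k hkV).1, (hF i hi).1, hlabel k hk, edgeCoeff]
    cases G.edge k j <;> simp [indicatorVec_symmDiff, ZModModule.sub_eq_add]
  · dsimp only at hk hl ⊢
    obtain ⟨hkV, -, -⟩ := Finset.mem_of_mem_erase_erase hk
    obtain ⟨hlV, -, -⟩ := Finset.mem_of_mem_erase_erase hl
    rw [F.cancel_Φ_f_x, (hF k hkV).2 l hlV, (hF k hkV).2 j hj, (hF i hi).2 l hlV]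
    simp only [edgeCoeff, hedge k hk l hl]
    cases G.edge k j <;> cases G.edge k l <;> cases G.edge i l <;> decide

theorem of_reflTransGen {G₀ G : LabeledGraph m} (hG₀ : G₀.IsReductionOf f)
    (hreach : Relation.ReflTransGen ReduceStep G₀ G) : G.IsReductionOf f := by
  induction hreach with
  | refl => exact hG₀
  | tail _ hstep ih => exact ih.of_reduceStep hstep

end LabeledGraph.IsReductionOf

end Algorithm

/-- Row `k` of `d` is `d (x_k)`, so on coordinate vectors the differential is `dᵀ`. -/
theorem reduction_algorithm_computes_homology {m : ℕ}
    (d : Matrix (Fin m) (Fin m) (ZMod 2)) (hd : d * d = 0)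
    (G₀ G : LabeledGraph m)
    (h0v : G₀.verts = Finset.univ)
    (h0l : ∀ k : Fin m, G₀.label k = {k})
    (h0e : ∀ k l : Fin m, G₀.edge k l = true ↔ d k l = 1)
    (hreach : Relation.ReflTransGen ReduceStep G₀ G)
    (hnoedge : ∀ k ∈ G.verts, ∀ l ∈ G.verts, G.edge k l = false) :
    let f := (Matrix.transpose d).mulVecLin
    let vec : Finset (Fin m) → (Fin m → ZMod 2) := fun S t => if t ∈ S then 1 else 0
    ∃ hmem : ∀ k : {k : Fin m // k ∈ G.verts}, vec (G.label k.1) ∈ LinearMap.ker f,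
      ∃ bas : Module.Basis {k : Fin m // k ∈ G.verts} (ZMod 2)
          (↥(LinearMap.ker f) ⧸
            Submodule.comap (LinearMap.ker f).subtype (LinearMap.range f)),
        ∀ k : {k : Fin m // k ∈ G.verts},
          bas k = Submodule.Quotient.mk ⟨vec (G.label k.1), hmem k⟩ := by
  intro f vec
  have hf : f ∘ₗ f = 0 := by
    rw [← Matrix.mulVecLin_mul, ← Matrix.transpose_mul, hd, Matrix.transpose_zero,
      Matrix.mulVecLin_zero]
  have hedge₀ : ∀ k l, G₀.edgeCoeff k l = f (Pi.single k 1) l := fun k l => by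
    have hdkl : d k l = 0 ∨ d k l = 1 := by generalize d k l = c; revert c; decide
    simp only [f, Matrix.mulVecLin_apply, Matrix.mulVec_single_one, LabeledGraph.edgeCoeff]
    rcases hdkl with h | h <;> simp [h, h0e]
  obtain ⟨F, hF⟩ := (LabeledGraph.IsReductionOf.initial h0v h0l hedge₀).of_reflTransGen hreach
  obtain ⟨hcyc, bas, hbas⟩ := F.exists_basis_homology hf fun k hk l hl => by
    rw [(hF k hk).2 l hl, LabeledGraph.edgeCoeff, hnoedge k hk l hl, if_neg Bool.false_ne_true]
  have hx : ∀ k : {k // k ∈ G.verts}, F.x k = vec (G.label k) := fun k => (hF k k.2).1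
  exact ⟨fun k => hx k ▸ hcyc k, bas, fun k => by simp only [hbas, hx]⟩
end
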